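/- For all t>0, a>0 and ξ∈ℝ, one has ∫_ℝ (∂²₁E)(ξ−w₁, a) Γ₀(w₁,t) dw₁ = −(1/2) ∫_ℝ Q_a(ξ−r) ∂_r Γ₀(r,t) dr, where ∂²₁E(z) = (z₁²−z₂²)/(2π|z|⁴) is the second tangential derivative of the Newtonian potential and Q_s(r)=r/(π(r²+s²)) is the conjugate Poisson kernel. Consequently, for x,z ∈ ℝ²₊, 0<w₂<x₂ and t>0, ∫_ℝ ∂²_{x₁}E(x−(w₁,w₂)) Γ((w₁,w₂)−z*, t) dw₁ = −(1/2) Γ₀(w₂+z₂,t) (Q_{x₂−w₂} *₁ ∂₁Γ₀(·,t))(x₁−z₁), where *₁ denotes convolution on ℝ. -/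

import Mathlib

/-!
Since `∂_r Q_a(ξ - r) = 2 ∂²₁E(ξ - r, a)`, the first identity is an integration by parts against
the Gaussian `Γ₀(·, t)`: for `a > 0` both `Q_a` and its derivative are bounded, so every product
involved is integrable and the boundary terms vanish. The second identity follows from the
factorisation `Γ((r, s), t) = Γ₀(r, t) Γ₀(s, t)` and the translation `w₁ ↦ w₁ + z₁`.
-/

open MeasureTheory Real
open scoped ENNReal

noncomputable section

/-- The open upper half plane ℝ²₊ = {x : x₂ > 0}. -/
def upperHalf : Set (ℝ × ℝ) := {x | 0 < x.2}

/-- 2D heat kernel Γ(x,t) = (4πt)⁻¹ exp(−|x|²/(4t)). -/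
def heatK (x : ℝ × ℝ) (t : ℝ) : ℝ :=
  (4 * π * t)⁻¹ * Real.exp (-(x.1 ^ 2 + x.2 ^ 2) / (4 * t))

/-- 1D heat kernel Γ₀(r,t) = (4πt)^{-1/2} exp(−r²/(4t)). -/
def heatK1 (r t : ℝ) : ℝ :=
  (Real.sqrt (4 * π * t))⁻¹ * Real.exp (-r ^ 2 / (4 * t))

/-- ∂²_{z₁} E(z) = (z₁² − z₂²)/(2π|z|⁴), for E(z) = −(2π)⁻¹ log|z|. -/
def d2E (z : ℝ × ℝ) : ℝ :=
  (z.1 ^ 2 - z.2 ^ 2) / (2 * π * (z.1 ^ 2 + z.2 ^ 2) ^ 2)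

/-- Poisson kernel P_s(r) = s/(π(r²+s²)). -/
def Pker (s r : ℝ) : ℝ := s / (π * (r ^ 2 + s ^ 2))

/-- Conjugate Poisson kernel Q_s(r) = r/(π(r²+s²)). -/
def Qker (s r : ℝ) : ℝ := r / (π * (r ^ 2 + s ^ 2))

/-- ∇⊥E(z) = (∂₂E(z), −∂₁E(z)) for E(z) = −(2π)⁻¹ log|z|. -/
def gradPerpE (z : ℝ × ℝ) : ℝ × ℝ :=
  (-z.2 / (2 * π * (z.1 ^ 2 + z.2 ^ 2)), z.1 / (2 * π * (z.1 ^ 2 + z.2 ^ 2)))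

/-- The Biot–Savart kernel ∇⊥_x D(x,y) = ∇⊥E(x−y) − ∇⊥E(x−y*). -/
def bsKernel (x y : ℝ × ℝ) : ℝ × ℝ :=
  gradPerpE (x.1 - y.1, x.2 - y.2) - gradPerpE (x.1 - y.1, x.2 + y.2)

/-- Integral of a real function against a finite signed measure (via Jordan decomposition). -/
def sInt (μ : SignedMeasure (ℝ × ℝ)) (f : ℝ × ℝ → ℝ) : ℝ :=
  (∫ y, f y ∂μ.toJordanDecomposition.posPart) - ∫ y, f y ∂μ.toJordanDecomposition.negPart

/-- Integral of a vector-valued function against a finite signed measure. -/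
def sIntV (μ : SignedMeasure (ℝ × ℝ)) (f : ℝ × ℝ → ℝ × ℝ) : ℝ × ℝ :=
  (∫ y, f y ∂μ.toJordanDecomposition.posPart) - ∫ y, f y ∂μ.toJordanDecomposition.negPart

/-- Total variation norm ‖μ‖_M of a finite signed measure. -/
def normM (μ : SignedMeasure (ℝ × ℝ)) : ℝ := (μ.totalVariation Set.univ).toReal

/-- The vorticity kernel W(x,y,t). -/
def Wk (x y : ℝ × ℝ) (t : ℝ) : ℝ :=
  heatK (x.1 - y.1, x.2 - y.2) t + heatK (x.1 - y.1, x.2 + y.2) t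
    + 4 * ∫ z₂ in (0:ℝ)..y.2, ∫ z₁ : ℝ, heatK (x.1 - z₁, x.2 + z₂) t * d2E (z₁ - y.1, z₂ - y.2)
    - 2 * heatK1 x.2 t * ∫ z₁ : ℝ, heatK1 (x.1 - z₁) t * Pker y.2 (z₁ - y.1)

/-- T(t)ω₀(x) = ∫ W(x,y,t) dω₀(y) for a finite signed measure ω₀. -/
def Tsg (ω₀ : SignedMeasure (ℝ × ℝ)) (t : ℝ) (x : ℝ × ℝ) : ℝ :=
  sInt ω₀ (fun y => Wk x y t)

/-- The boundary trace operator T₁μ(x₁) = π⁻¹ ∫ y₂/((x₁−y₁)²+y₂²) dμ(y). -/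
def T1op (μ : SignedMeasure (ℝ × ℝ)) (x₁ : ℝ) : ℝ :=
  π⁻¹ * sInt μ (fun y => y.2 / ((x₁ - y.1) ^ 2 + y.2 ^ 2))

lemma hasDerivAt_heatK1 (t r : ℝ) :
    HasDerivAt (fun s => heatK1 s t) (-(r / (2 * t)) * heatK1 r t) r := by
  have hexponent : HasDerivAt (fun s : ℝ => -s ^ 2 / (4 * t)) (-(2 * r) / (4 * t)) r := by
    simpa using (hasDerivAt_pow 2 r).neg.div_const (4 * t)
  refine (hexponent.exp.const_mul (√(4 * π * t))⁻¹).congr_deriv ?_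
  rw [heatK1]
  ring

lemma integrable_heatK1 {t : ℝ} (ht : 0 < t) : Integrable (fun r => heatK1 r t) := by
  convert (integrable_exp_neg_mul_sq (b := (4 * t)⁻¹) (by positivity)).const_mul
    (√(4 * π * t))⁻¹ using 3 with r
  rw [heatK1]
  ring_nf

lemma integrable_deriv_heatK1 {t : ℝ} (ht : 0 < t) :
    Integrable (deriv fun s => heatK1 s t) := by
  convert (integrable_mul_exp_neg_mul_sq (b := (4 * t)⁻¹) (by positivity)).const_mul
    (-(2 * t)⁻¹ * (√(4 * π * t))⁻¹) using 1 with r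
  ext r
  rw [(hasDerivAt_heatK1 t r).deriv, heatK1]
  ring_nf

lemma integral_deriv_mul_heatK1 {t : ℝ} (ht : 0 < t) {u u' : ℝ → ℝ}
    (hu : ∀ r, HasDerivAt u (u' r) r) {C C' : ℝ} (hC : ∀ r, |u r| ≤ C) (hC' : ∀ r, |u' r| ≤ C') :
    ∫ r, u' r * heatK1 r t = -∫ r, u r * deriv (fun s => heatK1 s t) r := by
  have hu_meas : AEStronglyMeasurable u :=
    (continuous_iff_continuousAt.2 fun r => (hu r).continuousAt).aestronglyMeasurable
  have hu'_meas : AEStronglyMeasurable u' := by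
    rw [show u' = deriv u from funext fun r => (hu r).deriv.symm]
    exact (measurable_deriv u).aestronglyMeasurable
  rw [integral_mul_deriv_eq_deriv_mul_of_integrable (fun r _ => hu r)
    (fun r _ => (hasDerivAt_heatK1 t r).differentiableAt.hasDerivAt)
    ((integrable_deriv_heatK1 ht).bdd_mul hu_meas (ae_of_all _ hC))
    ((integrable_heatK1 ht).bdd_mul hu'_meas (ae_of_all _ hC'))
    ((integrable_heatK1 ht).bdd_mul hu_meas (ae_of_all _ hC)), neg_neg]

lemma hasDerivAt_Qker {a : ℝ} (ha : a ≠ 0) (x : ℝ) :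
    HasDerivAt (Qker a) (-(2 * d2E (x, a))) x := by
  refine ((hasDerivAt_id x).div (((hasDerivAt_pow 2 x).add_const (a ^ 2)).const_mul π)
    (by positivity)).congr_deriv ?_
  simp only [d2E, id]
  field_simp
  ring

lemma abs_Qker_le {a : ℝ} (ha : 0 < a) (x : ℝ) : |Qker a x| ≤ (2 * π * a)⁻¹ := by
  have hd : (0:ℝ) < π * (x ^ 2 + a ^ 2) := by positivity
  rw [Qker, abs_div, abs_of_pos hd, inv_eq_one_div, div_le_div_iff₀ hd (by positivity)]
  nlinarith [sq_nonneg (|x| - a), sq_abs x, pi_pos, abs_nonneg x]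

lemma abs_d2E_le {a : ℝ} (ha : a ≠ 0) (x : ℝ) : |d2E (x, a)| ≤ (2 * π * a ^ 2)⁻¹ := by
  have hx : 0 ≤ x ^ 2 := sq_nonneg x
  have hd : (0:ℝ) < 2 * π * (x ^ 2 + a ^ 2) ^ 2 := by positivity
  have hnum : |x ^ 2 - a ^ 2| ≤ x ^ 2 + a ^ 2 :=
    abs_le.2 ⟨by linarith [sq_nonneg a], by linarith [sq_nonneg a]⟩
  rw [d2E, abs_div, abs_of_pos hd, inv_eq_one_div, div_le_div_iff₀ hd (by positivity), one_mul]
  calc |x ^ 2 - a ^ 2| * (2 * π * a ^ 2) ≤ (x ^ 2 + a ^ 2) * (2 * π * (x ^ 2 + a ^ 2)) := by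
        gcongr; linarith
    _ = 2 * π * (x ^ 2 + a ^ 2) ^ 2 := by ring

lemma integral_d2E_mul_heatK1 {t : ℝ} (ht : 0 < t) {a : ℝ} (ha : 0 < a) (ξ : ℝ) :
    ∫ w, d2E (ξ - w, a) * heatK1 w t
      = -(1/2) * ∫ r, Qker a (ξ - r) * deriv (fun s => heatK1 s t) r := by
  have hQ : ∀ r, HasDerivAt (fun r => Qker a (ξ - r)) (2 * d2E (ξ - r, a)) r := fun r => by
    simpa using (hasDerivAt_Qker ha.ne' (ξ - r)).comp_const_sub ξ r
  have hQ_bdd : ∀ r, |2 * d2E (ξ - r, a)| ≤ 2 * (2 * π * a ^ 2)⁻¹ := fun r => by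
    rw [abs_mul, abs_two]
    exact mul_le_mul_of_nonneg_left (abs_d2E_le ha.ne' _) zero_le_two
  rw [neg_mul_comm, ← integral_deriv_mul_heatK1 ht hQ (fun r => abs_Qker_le ha (ξ - r)) hQ_bdd,
    ← integral_const_mul]
  congr 1 with w
  ring

lemma heatK_eq_mul_heatK1 {t : ℝ} (ht : 0 ≤ t) (r s : ℝ) :
    heatK (r, s) t = heatK1 r t * heatK1 s t := by
  have hsqrt : (√(4 * π * t))⁻¹ * (√(4 * π * t))⁻¹ = (4 * π * t)⁻¹ := by
    rw [← mul_inv, Real.mul_self_sqrt (by positivity)]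
  rw [heatK, heatK1, heatK1, mul_mul_mul_comm, hsqrt, ← Real.exp_add]
  ring_nf

/-- ∫_ℝ (∂²₁E)(ξ−w₁,a) Γ₀(w₁,t) dw₁ = −(1/2)∫_ℝ Q_a(ξ−r) ∂_rΓ₀(r,t) dr, and
consequently for x,z ∈ ℝ²₊, 0 < w₂ < x₂,
∫_ℝ ∂²_{x₁}E(x−(w₁,w₂)) Γ((w₁,w₂)−z*,t) dw₁ = −(1/2)Γ₀(w₂+z₂,t)(Q_{x₂−w₂} *₁ ∂₁Γ₀(·,t))(x₁−z₁). -/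
theorem d2E_conv_heat_eq_conjPoisson :
    (∀ t > (0:ℝ), ∀ a > (0:ℝ), ∀ ξ : ℝ,
      (∫ w₁ : ℝ, d2E (ξ - w₁, a) * heatK1 w₁ t)
        = -(1/2) * ∫ r : ℝ, Qker a (ξ - r) * deriv (fun s => heatK1 s t) r)
    ∧
    (∀ t > (0:ℝ), ∀ x ∈ upperHalf, ∀ z ∈ upperHalf, ∀ w₂ : ℝ, 0 < w₂ → w₂ < x.2 →
      (∫ w₁ : ℝ, d2E (x.1 - w₁, x.2 - w₂) * heatK (w₁ - z.1, w₂ + z.2) t)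
        = -(1/2) * heatK1 (w₂ + z.2) t
            * ∫ r : ℝ, Qker (x.2 - w₂) (x.1 - z.1 - r) * deriv (fun s => heatK1 s t) r) := by
  refine ⟨fun t ht a ha ξ => integral_d2E_mul_heatK1 ht ha ξ, ?_⟩
  intro t ht x _ z _ w₂ _ hw₂x
  calc ∫ w₁, d2E (x.1 - w₁, x.2 - w₂) * heatK (w₁ - z.1, w₂ + z.2) t
      = (∫ w, d2E (x.1 - z.1 - w, x.2 - w₂) * heatK1 w t) * heatK1 (w₂ + z.2) t := by
        simp_rw [heatK_eq_mul_heatK1 ht.le, ← mul_assoc, integral_mul_const]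
        rw [← integral_sub_right_eq_self
          (fun w => d2E (x.1 - z.1 - w, x.2 - w₂) * heatK1 w t) z.1]
        simp only [sub_sub_sub_cancel_right]
    _ = _ := by
        rw [integral_d2E_mul_heatK1 ht (sub_pos.2 hw₂x)]
        ring

end
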